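/- arXiv:0906.0423 — 7 statements merged into one kernel-verified Lean document; each statement's English description precedes it below -/
import Mathlib

section
/- Let 0 < a < b be real numbers and let m be a positive integer with π·m·(b − a) ≥ 2. Then for every natural number M with M ≥ 4·m·(b − a), one has Σ_{l=1}^{M} sin²( 2πm·(a + (b − a)·l/M) ) ≥ M/4. -/
/-!
Write `sin² x = (1 - cos 2x)/2`, so the sum is `M/2` minus half a sum of cosines along an
arithmetic progression with step `φ = 4πm(b - a)/M ∈ (0, π]`. Telescoping bounds such a sum by
`1 / sin(φ/2)`, and Jordan's inequality `sin(φ/2) ≥ φ/π` turns this into `π/φ = M/(4m(b - a))`,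
which is at most `πM/8 ≤ M/2` because `πm(b - a) ≥ 2`.
-/

open Real Finset

theorem two_mul_sin_half_mul_sum_Icc_cos (θ φ : ℝ) (n : ℕ) :
    2 * sin (φ / 2) * ∑ l ∈ Icc 1 n, cos (θ + l * φ) =
      sin (θ + (n + 1 / 2) * φ) - sin (θ + φ / 2) := by
  induction n with
  | zero => simp [div_eq_inv_mul, mul_comm]
  | succ n ih =>
    have step := sin_sub_sin (θ + (n + 1 + 1 / 2) * φ) (θ + (n + 1 / 2) * φ)
    rw [show (θ + (n + 1 + 1 / 2) * φ - (θ + (n + 1 / 2) * φ)) / 2 = φ / 2 by ring,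
      show (θ + (n + 1 + 1 / 2) * φ + (θ + (n + 1 / 2) * φ)) / 2 = θ + (n + 1) * φ by ring]
      at step
    rw [sum_Icc_succ_top (by omega), mul_add, ih]
    push_cast
    linarith

theorem abs_sum_Icc_cos_mul_abs_sin_half_le_one (θ φ : ℝ) (n : ℕ) :
    |∑ l ∈ Icc 1 n, cos (θ + l * φ)| * |sin (φ / 2)| ≤ 1 := by
  have h := congrArg abs (two_mul_sin_half_mul_sum_Icc_cos θ φ n)
  rw [abs_mul, abs_mul, abs_two] at h
  have := abs_sub (sin (θ + (n + 1 / 2) * φ)) (sin (θ + φ / 2))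
  linarith [abs_sin_le_one (θ + (n + 1 / 2) * φ), abs_sin_le_one (θ + φ / 2)]

theorem abs_sum_Icc_cos_le_pi_div {θ φ : ℝ} (hφ : 0 < φ) (hφπ : φ ≤ π) (n : ℕ) :
    |∑ l ∈ Icc 1 n, cos (θ + l * φ)| ≤ π / φ := by
  have jordan : φ / π ≤ sin (φ / 2) := by
    have := mul_le_sin (x := φ / 2) (by positivity) (by linarith)
    calc φ / π = 2 / π * (φ / 2) := by ring
      _ ≤ sin (φ / 2) := this
  have hsin : 0 < sin (φ / 2) := lt_of_lt_of_le (by positivity) jordan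
  have h := abs_sum_Icc_cos_mul_abs_sin_half_le_one θ φ n
  rw [abs_of_pos hsin] at h
  rw [le_div_iff₀ hφ]
  calc |∑ l ∈ Icc 1 n, cos (θ + l * φ)| * φ
      ≤ |∑ l ∈ Icc 1 n, cos (θ + l * φ)| * (π * sin (φ / 2)) := by
        gcongr
        rwa [div_le_iff₀' pi_pos] at jordan
    _ ≤ π := by nlinarith [pi_pos]

theorem sum_sin_sq_eq {ι : Type*} (s : Finset ι) (x : ι → ℝ) :
    ∑ i ∈ s, sin (x i) ^ 2 = s.card / 2 - (∑ i ∈ s, cos (2 * x i)) / 2 := by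
  simp only [sin_sq_eq_half_sub, sum_sub_distrib, sum_const, nsmul_eq_mul, sum_div]
  ring

theorem stmt_5_general (a b : ℝ) (m : ℕ)
    (hπ : Real.pi * m * (b - a) ≥ 2) (M : ℕ)
    (hM : (M : ℝ) ≥ 4 * m * (b - a)) :
    ∑ l ∈ Finset.Icc 1 M,
        Real.sin (2 * Real.pi * m * (a + (b - a) * l / M)) ^ 2 ≥ (M : ℝ) / 4 := by
  have hc : 0 < m * (b - a) := by nlinarith [pi_pos, pi_le_four]
  have hMpos : (0 : ℝ) < M := by linarith
  set φ := 4 * π * (m * (b - a)) / M with hφ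
  have hφpos : 0 < φ := by positivity
  have hφπ : φ ≤ π := by
    rw [hφ, div_le_iff₀ hMpos]
    nlinarith [pi_pos]
  have hphase : ∀ l ∈ Icc 1 M, 2 * (2 * π * m * (a + (b - a) * l / M)) =
      4 * π * m * a + l * φ := by
    intro l _
    rw [hφ]
    field_simp
    ring
  have hbound : π / φ ≤ π * M / 8 := by
    rw [hφ, div_div_eq_mul_div, div_le_div_iff₀ (by positivity) (by norm_num)]
    nlinarith [mul_le_mul_of_nonneg_left hπ (by positivity : (0 : ℝ) ≤ π * M)]
  rw [sum_sin_sq_eq, sum_congr rfl fun l hl => by rw [hphase l hl], Nat.card_Icc,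
    Nat.add_sub_cancel]
  have hS := (abs_le.mp ((abs_sum_Icc_cos_le_pi_div (θ := 4 * π * m * a) hφpos hφπ M).trans
    hbound)).2
  nlinarith [pi_le_four]

/-- Lower bound on the sum of squared sines at equispaced sampling points:
for `0 < a < b`, a positive integer `m` with `π m (b-a) ≥ 2`, and a natural number
`M ≥ 4 m (b-a)`, one has `∑_{l=1}^M sin²(2πm(a + (b-a) l / M)) ≥ M/4`. -/
theorem stmt_5 (a b : ℝ) (ha : 0 < a) (hab : a < b) (m : ℕ) (hm : 0 < m)
    (hπ : Real.pi * m * (b - a) ≥ 2) (M : ℕ)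
    (hM : (M : ℝ) ≥ 4 * m * (b - a)) :
    ∑ l ∈ Finset.Icc 1 M,
        Real.sin (2 * Real.pi * m * (a + (b - a) * l / M)) ^ 2 ≥ (M : ℝ) / 4 :=
  stmt_5_general a b m hπ M hM
end

section
/- Let 0 < a < b be real numbers and let γ : [a, b] → ℝ satisfy 0 < γ₁ ≤ γ(u) ≤ γ₂ for all u ∈ [a, b]. For a positive integer m and a positive integer M, set u_l = a + (b − a)·l/M for l = 1, …, M and define τ(m, M) = (1/(4π²m²M)) Σ_{l=1}^{M} γ(u_l)² · sin²(2πm·u_l). Then there exists a constant K > 0 (independent of m and M) such that for all positive integers m, M with π·m·(b − a) ≥ 2 and M ≥ 4·m·(b − a), one has τ(m, M) ≥ K·m^{−2}. -/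
/-!
Writing `sin² x = 1/2 - cos (2x)/2`, the sampled sum of `sin²` is `M/2` minus half a cosine sum
along an arithmetic progression of step `2ψ`, `ψ = 2πm(b-a)/M`. Telescoping with
`2 sin ψ cos x = sin (x + ψ) - sin (x - ψ)` bounds that cosine sum by `1/sin ψ`, and since
`M ≥ 4m(b-a)` forces `ψ ≤ π/2`, Jordan's inequality gives `1/sin ψ ≤ π/(2ψ) = πM/(8·πm(b-a))`,
which is at most `πM/8` because `πm(b-a) ≥ 2`. Hence the `sin²` sum is at least `(8-π)M/16`,
and the weights contribute a factor `γ₁²`.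
-/

open Real Finset

theorem two_mul_sin_half_mul_sum_cos (α φ : ℝ) (M : ℕ) :
    2 * sin (φ / 2) * ∑ l ∈ Icc 1 M, cos (α + l * φ) =
      sin (α + M * φ + φ / 2) - sin (α + φ / 2) := by
  induction M with
  | zero => simp
  | succ M ih =>
    rw [sum_Icc_succ_top (by omega), mul_add, ih, two_mul_sin_mul_cos]
    have hneg : φ / 2 - (α + ↑(M + 1) * φ) = -(α + M * φ + φ / 2) := by push_cast; ring
    rw [hneg, sin_neg]
    push_cast
    ring_nf

theorem abs_sin_half_mul_abs_sum_cos_le_one (α φ : ℝ) (M : ℕ) :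
    |sin (φ / 2)| * |∑ l ∈ Icc 1 M, cos (α + l * φ)| ≤ 1 := by
  have h := congrArg abs (two_mul_sin_half_mul_sum_cos α φ M)
  rw [abs_mul, abs_mul, abs_two] at h
  have := (abs_sub _ _).trans (add_le_add (abs_sin_le_one (α + M * φ + φ / 2))
    (abs_sin_le_one (α + φ / 2)))
  linarith

theorem sum_sin_sq_eq_s6 (θ ψ : ℝ) (M : ℕ) :
    ∑ l ∈ Icc 1 M, sin (θ + l * ψ) ^ 2 =
      M / 2 - (∑ l ∈ Icc 1 M, cos (2 * θ + l * (2 * ψ))) / 2 := by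
  have hdouble (l : ℕ) : 2 * (θ + l * ψ) = 2 * θ + l * (2 * ψ) := by ring
  simp only [sin_sq_eq_half_sub, hdouble, sum_sub_distrib, sum_const, Nat.card_Icc,
    nsmul_eq_mul, ← sum_div]
  push_cast
  ring

theorem sub_le_sum_sin_sq (θ : ℝ) {ψ : ℝ} (hψ : 0 < ψ) (hψπ : ψ ≤ π / 2) (M : ℕ) :
    M / 2 - π / (4 * ψ) ≤ ∑ l ∈ Icc 1 M, sin (θ + l * ψ) ^ 2 := by
  set S := ∑ l ∈ Icc 1 M, cos (2 * θ + l * (2 * ψ))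
  have hjordan : 2 / π * ψ ≤ sin ψ := mul_le_sin hψ.le hψπ
  have hsin : 0 < sin ψ := lt_of_lt_of_le (by positivity) hjordan
  have hdirichlet : sin ψ * |S| ≤ 1 := by
    simpa [abs_of_pos hsin] using abs_sin_half_mul_abs_sum_cos_le_one (2 * θ) (2 * ψ) M
  have hS : S ≤ π / (2 * ψ) := by
    have h := (mul_le_mul_of_nonneg_right hjordan (abs_nonneg S)).trans hdirichlet
    rw [div_mul_eq_mul_div, div_mul_eq_mul_div, div_le_iff₀ pi_pos] at h
    rw [le_div_iff₀ (by positivity)]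
    nlinarith [le_abs_self S]
  have hquarter : π / (2 * ψ) / 2 = π / (4 * ψ) := by field_simp; ring
  rw [sum_sin_sq_eq_s6]
  linarith

theorem mem_Icc_add_mul_div {a b : ℝ} (hab : a ≤ b) {l M : ℕ} (hlM : l ≤ M) :
    a + (b - a) * l / M ∈ Set.Icc a b := by
  rcases M.eq_zero_or_pos with rfl | hM
  · simpa using hab
  have hfrac : (l : ℝ) / M ≤ 1 := div_le_one_of_le₀ (by exact_mod_cast hlM) (by positivity)
  rw [mul_div_assoc]
  constructor <;> nlinarith [show (0 : ℝ) ≤ l / M by positivity]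

theorem sum_sin_sq_sample_ge {a b : ℝ} {m M : ℕ} (hM : 0 < M) (hπm : π * m * (b - a) ≥ 2)
    (hMm : (M : ℝ) ≥ 4 * m * (b - a)) :
    M * (8 - π) / 16 ≤ ∑ l ∈ Icc 1 M, sin (2 * π * m * (a + (b - a) * l / M)) ^ 2 := by
  have hM' : (0 : ℝ) < M := by exact_mod_cast hM
  have hψ : 0 < 2 * π * m * (b - a) / M := div_pos (by linarith) hM'
  set ψ := 2 * π * m * (b - a) / M
  have hsample (l : ℕ) : 2 * π * m * (a + (b - a) * l / M) = 2 * π * m * a + l * ψ := by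
    simp only [ψ]; ring
  have hψπ : ψ ≤ π / 2 := by
    rw [div_le_iff₀ hM']; nlinarith [pi_pos]
  have hψM : π / (4 * ψ) ≤ π * M / 16 := by
    rw [div_le_div_iff₀ (by positivity) (by norm_num)]
    simp only [ψ]
    rw [mul_div_assoc', mul_div_assoc', le_div_iff₀ hM']
    nlinarith [mul_pos pi_pos hM']
  simp only [hsample]
  linarith [sub_le_sum_sin_sq (2 * π * m * a) hψ hψπ M]

theorem stmt_6_general (a b : ℝ) (γ : ℝ → ℝ) (γ₁ γ₂ : ℝ)
    (hγ₁ : 0 < γ₁) (hγ : ∀ u ∈ Set.Icc a b, γ₁ ≤ γ u ∧ γ u ≤ γ₂) :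
    ∃ K > (0:ℝ), ∀ m M : ℕ, 0 < m → 0 < M →
      Real.pi * m * (b - a) ≥ 2 → (M : ℝ) ≥ 4 * m * (b - a) →
      (1 / (4 * Real.pi ^ 2 * (m : ℝ) ^ 2 * M)) *
          ∑ l ∈ Finset.Icc 1 M, γ (a + (b - a) * l / M) ^ 2 *
            Real.sin (2 * Real.pi * m * (a + (b - a) * l / M)) ^ 2
        ≥ K / (m : ℝ) ^ 2 := by
  have h8π : 0 < 8 - π := by linarith [pi_lt_four]
  refine ⟨γ₁ ^ 2 * (8 - π) / (64 * π ^ 2), by positivity, ?_⟩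
  intro m M _ hM hπm hMm
  have hab : a ≤ b := by
    by_contra! hba
    have : π * m * (b - a) ≤ 0 := mul_nonpos_of_nonneg_of_nonpos (by positivity) (by linarith)
    linarith
  have hweight : γ₁ ^ 2 * ∑ l ∈ Icc 1 M, sin (2 * π * m * (a + (b - a) * l / M)) ^ 2 ≤
      ∑ l ∈ Icc 1 M, γ (a + (b - a) * l / M) ^ 2 *
        sin (2 * π * m * (a + (b - a) * l / M)) ^ 2 := by
    rw [mul_sum]
    refine sum_le_sum fun l hl ↦ mul_le_mul_of_nonneg_right ?_ (sq_nonneg _)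
    exact pow_le_pow_left₀ hγ₁.le (hγ _ (mem_Icc_add_mul_div hab (mem_Icc.mp hl).2)).1 2
  calc γ₁ ^ 2 * (8 - π) / (64 * π ^ 2) / (m : ℝ) ^ 2
      = 1 / (4 * π ^ 2 * m ^ 2 * M) * (γ₁ ^ 2 * (M * (8 - π) / 16)) := by
        field_simp; ring
    _ ≤ _ := by
        gcongr
        exact (mul_le_mul_of_nonneg_left (sum_sin_sq_sample_ge hM hπm hMm) (sq_nonneg γ₁)).trans
          hweight

/-- Discrete variance bound for a boxcar-like blurring function: with equispaced
sampling points `u_l = a + (b-a) l / M` and a bounded weight `γ`, the quantity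
`τ(m,M) = (1/(4π²m²M)) ∑_{l=1}^M γ(u_l)² sin²(2πm u_l)` satisfies `τ(m,M) ≥ K m⁻²`
for some `K > 0` independent of `m` and `M`, whenever `π m (b-a) ≥ 2` and
`M ≥ 4 m (b-a)`. -/
theorem stmt_6 (a b : ℝ) (ha : 0 < a) (hab : a < b) (γ : ℝ → ℝ) (γ₁ γ₂ : ℝ)
    (hγ₁ : 0 < γ₁) (hγ : ∀ u ∈ Set.Icc a b, γ₁ ≤ γ u ∧ γ u ≤ γ₂) :
    ∃ K > (0:ℝ), ∀ m M : ℕ, 0 < m → 0 < M →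
      Real.pi * m * (b - a) ≥ 2 → (M : ℝ) ≥ 4 * m * (b - a) →
      (1 / (4 * Real.pi ^ 2 * (m : ℝ) ^ 2 * M)) *
          ∑ l ∈ Finset.Icc 1 M, γ (a + (b - a) * l / M) ^ 2 *
            Real.sin (2 * Real.pi * m * (a + (b - a) * l / M)) ^ 2
        ≥ K / (m : ℝ) ^ 2 :=
  stmt_6_general a b γ γ₁ γ₂ hγ₁ hγ
end

section
/- Let 0 < a < b and α > 0 be real numbers. Then there exist constants C₁ > 0, C₂ > 0 and a real number m₀ ≥ 2 such that for every real m ≥ m₀, C₁·m^{−b}·(ln m)^{−1}·exp(−α·m^{a}) ≤ ∫_a^b exp(−α·m^{u}) du ≤ C₂·m^{−a}·(ln m)^{−1}·exp(−α·m^{a}). -/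
/-!
The substitution `v = m^u` makes `m^u e^{-α m^u}` exactly integrable:
`α log m ∫_a^b m^u e^{-α m^u} du = e^{-α m^a} - e^{-α m^b}`.
On `[a, b]` the weight `m^u` lies between `m^a` and `m^b`, so `∫_a^b e^{-α m^u} du` is squeezed
between `m^{-b}` and `m^{-a}` times that integral. Finally `m^b - m^a → ∞`, so for large `m` the
term `e^{-α m^b}` is at most half of `e^{-α m^a}`.
-/

open Real Filter Set

lemma hasDerivAt_neg_exp_neg_mul_const_rpow {m : ℝ} (hm : 0 < m) (α u : ℝ) :
    HasDerivAt (fun u => -exp (-α * m ^ u)) (α * log m * (m ^ u * exp (-α * m ^ u))) u := by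
  have h := ((((hasStrictDerivAt_const_rpow hm u).hasDerivAt).const_mul (-α)).exp).neg
  exact h.congr_deriv (by ring)

lemma mul_integral_const_rpow_mul_exp_neg_mul_const_rpow {m : ℝ} (hm : 0 < m) (α a b : ℝ) :
    α * log m * ∫ u in a..b, m ^ u * exp (-α * m ^ u) = exp (-α * m ^ a) - exp (-α * m ^ b) := by
  have hcont : Continuous fun u : ℝ => α * log m * (m ^ u * exp (-α * m ^ u)) := by
    have := continuous_const_rpow hm.ne'
    fun_prop
  rw [← intervalIntegral.integral_const_mul, intervalIntegral.integral_eq_sub_of_hasDerivAt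
    (fun u _ => hasDerivAt_neg_exp_neg_mul_const_rpow hm α u) (hcont.intervalIntegrable a b)]
  ring

section WeightedIntegral

variable {m a b : ℝ} {f : ℝ → ℝ}

lemma rpow_neg_mul_integral_const_rpow_mul_le (hm : 1 ≤ m) (hab : a ≤ b) (hf : Continuous f)
    (hf0 : ∀ u ∈ Icc a b, 0 ≤ f u) : m ^ (-b) * ∫ u in a..b, m ^ u * f u ≤ ∫ u in a..b, f u := by
  have hpow := continuous_const_rpow (by linarith : m ≠ 0)
  rw [← intervalIntegral.integral_const_mul]
  refine intervalIntegral.integral_mono_on hab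
    ((continuous_const.mul (hpow.mul hf)).intervalIntegrable a b) (hf.intervalIntegrable a b)
    fun u hu => ?_
  calc m ^ (-b) * (m ^ u * f u) = m ^ (u - b) * f u := by
        rw [← mul_assoc, ← rpow_add (by linarith), neg_add_eq_sub]
    _ ≤ 1 * f u := by
        gcongr
        · exact hf0 u hu
        · exact rpow_le_one_of_one_le_of_nonpos hm (by linarith [hu.2])
    _ = f u := one_mul _

lemma integral_le_rpow_neg_mul_integral_const_rpow_mul (hm : 1 ≤ m) (hab : a ≤ b)
    (hf : Continuous f) (hf0 : ∀ u ∈ Icc a b, 0 ≤ f u) :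
    ∫ u in a..b, f u ≤ m ^ (-a) * ∫ u in a..b, m ^ u * f u := by
  have hpow := continuous_const_rpow (by linarith : m ≠ 0)
  rw [← intervalIntegral.integral_const_mul]
  refine intervalIntegral.integral_mono_on hab (hf.intervalIntegrable a b)
    ((continuous_const.mul (hpow.mul hf)).intervalIntegrable a b)
    fun u hu => ?_
  calc f u = 1 * f u := (one_mul _).symm
    _ ≤ m ^ (u - a) * f u :=
        mul_le_mul_of_nonneg_right (one_le_rpow hm (by linarith [hu.1])) (hf0 u hu)
    _ = m ^ (-a) * (m ^ u * f u) := by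
        rw [← mul_assoc, ← rpow_add (by linarith), neg_add_eq_sub]

end WeightedIntegral

lemma eventually_two_mul_exp_neg_mul_rpow_le {a b α : ℝ} (ha : 0 ≤ a) (hab : a < b)
    (hα : 0 < α) : ∀ᶠ m : ℝ in atTop, 2 * exp (-α * m ^ b) ≤ exp (-α * m ^ a) := by
  filter_upwards [eventually_ge_atTop 1,
    (tendsto_rpow_atTop (sub_pos.2 hab)).eventually_ge_atTop (1 + log 2 / α)] with m hm1 hmba
  have hma : 1 ≤ m ^ a := one_le_rpow hm1 ha
  have hgap : α * m ^ a + log 2 ≤ α * m ^ b := by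
    have hsplit : m ^ b = m ^ a * m ^ (b - a) := by
      rw [← rpow_add (by linarith), add_sub_cancel]
    have hlog : 0 ≤ log 2 / α := div_nonneg (log_nonneg one_le_two) hα.le
    have : m ^ a + log 2 / α ≤ m ^ b := by rw [hsplit]; nlinarith
    calc α * m ^ a + log 2 = α * (m ^ a + log 2 / α) := by field_simp
      _ ≤ α * m ^ b := by gcongr
  calc 2 * exp (-α * m ^ b) ≤ 2 * exp (-α * m ^ a - log 2) := by gcongr; linarith
    _ = exp (-α * m ^ a) := by
        rw [exp_sub, exp_log two_pos]; ring

/-- Two-sided Laplace-type bound: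
`C₁ m^{-b} (ln m)⁻¹ e^{-α m^a} ≤ ∫_a^b e^{-α m^u} du ≤ C₂ m^{-a} (ln m)⁻¹ e^{-α m^a}`
for all sufficiently large real `m`, where `0 < a < b` and `α > 0`. -/
theorem stmt_9 (a b α : ℝ) (ha : 0 < a) (hab : a < b) (hα : 0 < α) :
    ∃ C₁ > (0:ℝ), ∃ C₂ > (0:ℝ), ∃ m₀ : ℝ, 2 ≤ m₀ ∧ ∀ m : ℝ, m₀ ≤ m →
      C₁ * m ^ (-b) * (Real.log m)⁻¹ * Real.exp (-α * m ^ a) ≤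
          (∫ u in a..b, Real.exp (-α * m ^ u)) ∧
      (∫ u in a..b, Real.exp (-α * m ^ u)) ≤
          C₂ * m ^ (-a) * (Real.log m)⁻¹ * Real.exp (-α * m ^ a) := by
  obtain ⟨m₀, hm₀⟩ := eventually_atTop.1
    ((eventually_gt_atTop 1).and (eventually_two_mul_exp_neg_mul_rpow_le ha.le hab hα))
  refine ⟨(2 * α)⁻¹, by positivity, α⁻¹, by positivity, max m₀ 2, le_max_right _ _,
    fun m hm => ?_⟩
  obtain ⟨hm1, hhalf⟩ := hm₀ m (le_of_max_le_left hm)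
  have hαL : 0 < α * log m := mul_pos hα (log_pos hm1)
  have hJ : ∫ u in a..b, m ^ u * exp (-α * m ^ u) =
      (exp (-α * m ^ a) - exp (-α * m ^ b)) / (α * log m) := by
    rw [eq_div_iff hαL.ne', mul_comm]
    exact mul_integral_const_rpow_mul_exp_neg_mul_const_rpow (by linarith) α a b
  have hexp : Continuous fun u : ℝ => exp (-α * m ^ u) := by
    have := continuous_const_rpow (by linarith : m ≠ 0)
    fun_prop
  have hb_pos := exp_pos (-α * m ^ b)
  constructor
  · calc (2 * α)⁻¹ * m ^ (-b) * (log m)⁻¹ * exp (-α * m ^ a)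
          = m ^ (-b) * (exp (-α * m ^ a) / 2 / (α * log m)) := by field_simp
      _ ≤ m ^ (-b) * ∫ u in a..b, m ^ u * exp (-α * m ^ u) := by rw [hJ]; gcongr; linarith
      _ ≤ _ := rpow_neg_mul_integral_const_rpow_mul_le hm1.le hab.le hexp fun _ _ => (exp_pos _).le
  · calc _ ≤ m ^ (-a) * ∫ u in a..b, m ^ u * exp (-α * m ^ u) :=
          integral_le_rpow_neg_mul_integral_const_rpow_mul hm1.le hab.le hexp
            fun _ _ => (exp_pos _).le
      _ ≤ m ^ (-a) * (exp (-α * m ^ a) / (α * log m)) := by rw [hJ]; gcongr; linarith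
      _ = α⁻¹ * m ^ (-a) * (log m)⁻¹ * exp (-α * m ^ a) := by field_simp
end

section
/- Let a < b be real numbers and let ν, α, β : [a, b] → ℝ be continuous functions with ν₁ ≤ ν(u) ≤ ν₂, 0 < α₁ ≤ α(u) ≤ α₂ for all u, and with β continuously differentiable on [a, b] and attaining its minimum value β₁ = β(u*) > 0 at some point u* ∈ [a, b]. Then there exists a real number m₀ such that for every real m ≥ m₀, e^{−1}·m^{−(2ν₂ + β₁ + 1)}·exp(−α₂·m^{β₁}) ≤ ∫_a^b m^{−2ν(u)}·exp(−α(u)·m^{β(u)}) du ≤ (b − a)·m^{−2ν₁}·exp(−α₁·m^{β₁}). -/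
/-!
The upper bound is pointwise: on `[a, b]` the integrand is at most `m^{-2ν₁} e^{-α₁ m^{β₁}}`.
For the lower bound, `β` has a bounded derivative, hence is `K`-Lipschitz, so on a window of
width `δ = m^{-(β₁+1)}` inside `[a, b]` next to `u*` we have `β ≤ β₁ + Kδ`. There
`m^{β₁ + Kδ} - m^{β₁} ≲ K log m / m → 0`, so the exponent loses at most `1` and the window
alone contributes `δ · e⁻¹ m^{-2ν₂} e^{-α₂ m^{β₁}}`.
-/

open Real Filter Set Topology Metric MeasureTheory intervalIntegral

lemma rpow_sub_one_le_mul_log_mul_rpow {m : ℝ} (hm : 0 < m) (h : ℝ) :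
    m ^ h - 1 ≤ h * log m * m ^ h := by
  have hpos := rpow_pos_of_pos hm h
  calc m ^ h - 1 = (1 - (m ^ h)⁻¹) * m ^ h := by field_simp
    _ ≤ h * log m * m ^ h := by
      gcongr
      rw [← log_rpow hm]
      exact one_sub_inv_le_log_of_pos hpos

lemma exists_lipschitzOnWith_of_hasDerivAt {E : Type*} [NormedAddCommGroup E] [NormedSpace ℝ E]
    {f f' : ℝ → E} {s : Set ℝ} (hs : Convex ℝ s) (hs' : IsCompact s)
    (hf : ∀ x ∈ s, HasDerivAt f (f' x) x) (hf' : ContinuousOn f' s) :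
    ∃ K, LipschitzOnWith K f s := by
  obtain ⟨C, hC⟩ := hs'.exists_bound_of_continuousOn hf'
  refine ⟨C.toNNReal, hs.lipschitzOnWith_of_nnnorm_hasDerivWithin_le
    (fun x hx => (hf x hx).hasDerivWithinAt) fun x hx => ?_⟩
  rw [← NNReal.coe_le_coe, coe_nnnorm]
  exact (hC x hx).trans (le_coe_toNNReal C)

lemma LipschitzOnWith.le_add_mul_of_dist_le {f : ℝ → ℝ} {K : NNReal} {s : Set ℝ}
    (hf : LipschitzOnWith K f s) {x y r : ℝ} (hx : x ∈ s) (hy : y ∈ s) (hxy : dist x y ≤ r) :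
    f x ≤ f y + K * r := by
  have := (hf.dist_le_mul x hx y hy).trans (mul_le_mul_of_nonneg_left hxy K.coe_nonneg)
  rw [Real.dist_eq] at this
  linarith [le_abs_self (f x - f y)]

lemma exists_Icc_subset_inter_closedBall {a b u δ : ℝ} (hu : u ∈ Icc a b) (hδ : δ ≤ b - a) :
    ∃ c, Icc c (c + δ) ⊆ Icc a b ∩ closedBall u δ := by
  refine ⟨min u (b - δ), fun v hv => ?_⟩
  rw [Real.closedBall_eq_Icc]
  obtain ⟨hv₁, hv₂⟩ := hv
  obtain ⟨hau, hub⟩ := hu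
  rcases min_cases u (b - δ) with ⟨h, _⟩ | ⟨h, _⟩ <;> rw [h] at hv₁ hv₂ <;>
    exact ⟨⟨by linarith, by linarith⟩, by linarith, by linarith⟩

lemma mul_le_integral_of_le_on_Icc {f : ℝ → ℝ} {a b c δ K : ℝ} (hδ : 0 ≤ δ)
    (hsub : Icc c (c + δ) ⊆ Icc a b) (hf : IntervalIntegrable f volume a b)
    (hf₀ : ∀ u ∈ Icc a b, 0 ≤ f u) (hK : ∀ u ∈ Icc c (c + δ), K ≤ f u) :
    δ * K ≤ ∫ u in a..b, f u := by
  have hcδ : c ≤ c + δ := le_add_of_nonneg_right hδ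
  obtain ⟨hac, hcb⟩ := (Icc_subset_Icc_iff hcδ).1 hsub
  have hab : a ≤ b := hac.trans (hcδ.trans hcb)
  calc δ * K = ∫ _ in c..(c + δ), K := by simp
    _ ≤ ∫ u in c..(c + δ), f u :=
      integral_mono_on hcδ intervalIntegrable_const (hf.mono_set (by
        rwa [uIcc_of_le hcδ, uIcc_of_le hab])) hK
    _ ≤ ∫ u in a..b, f u := by
      refine integral_mono_interval hac hcδ hcb ?_ hf
      rw [EventuallyLE, ae_restrict_iff' measurableSet_Ioc]
      exact Eventually.of_forall fun u hu => hf₀ u (Ioc_subset_Icc_self hu)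

lemma integral_le_mul_of_abs_le {f : ℝ → ℝ} {a b C : ℝ} (hab : a ≤ b)
    (h : ∀ u ∈ Icc a b, |f u| ≤ C) : ∫ u in a..b, f u ≤ (b - a) * C := by
  refine (le_abs_self _).trans ?_
  have := norm_integral_le_of_norm_le_const (f := f) (C := C) fun u hu =>
    h u (Ioc_subset_Icc_self (uIoc_of_le hab ▸ hu))
  rwa [Real.norm_eq_abs, abs_of_nonneg (sub_nonneg.2 hab), mul_comm] at this

lemma rpow_mul_exp_le_rpow_mul_exp {m ν ν₁ α α₁ β β₁ : ℝ} (hm : 1 ≤ m) (hν : ν₁ ≤ ν)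
    (hα₁ : 0 ≤ α₁) (hα : α₁ ≤ α) (hβ : β₁ ≤ β) :
    m ^ (-(2 * ν)) * exp (-α * m ^ β) ≤ m ^ (-(2 * ν₁)) * exp (-α₁ * m ^ β₁) := by
  have hmβ : α₁ * m ^ β₁ ≤ α * m ^ β :=
    mul_le_mul hα (rpow_le_rpow_of_exponent_le hm hβ) (by positivity) (hα₁.trans hα)
  refine mul_le_mul (rpow_le_rpow_of_exponent_le hm (by linarith)) (exp_le_exp.2 (by linarith))
    (exp_pos _).le (by positivity)

lemma exp_neg_one_mul_rpow_mul_exp_le {m ν ν₂ α α₂ β β₁ : ℝ} (hm : 1 ≤ m) (hν : ν ≤ ν₂)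
    (hα : α ≤ α₂) (hβ : α₂ * m ^ β ≤ α₂ * m ^ β₁ + 1) :
    exp (-1) * m ^ (-(2 * ν₂)) * exp (-α₂ * m ^ β₁) ≤ m ^ (-(2 * ν)) * exp (-α * m ^ β) := by
  have hmβ : α * m ^ β ≤ α₂ * m ^ β := by gcongr
  rw [mul_comm (exp (-1)), mul_assoc, ← exp_add]
  exact mul_le_mul (rpow_le_rpow_of_exponent_le hm (by linarith)) (exp_le_exp.2 (by linarith))
    (exp_pos _).le (by positivity)

lemma eventually_mul_rpow_add_le {α β₁ L : ℝ} (hα : 0 ≤ α) (hβ₁ : 0 ≤ β₁) (hL : 0 ≤ L) :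
    ∀ᶠ m : ℝ in atTop, α * m ^ (β₁ + L * m ^ (-(β₁ + 1))) ≤ α * m ^ β₁ + 1 := by
  have hlog : Tendsto (fun m => log m / m) atTop (𝓝 0) :=
    isLittleO_log_id_atTop.tendsto_div_nhds_zero
  have hη : Tendsto (fun m => α * (L * (log m / m)) * exp (L * (log m / m))) atTop (𝓝 0) := by
    simpa using ((hlog.const_mul L).const_mul α).mul (hlog.const_mul L).rexp
  filter_upwards [eventually_ge_atTop 1, hη.eventually_le_const one_pos] with m hm hle
  have hm₀ : 0 < m := one_pos.trans_le hm
  have hlog₀ : 0 ≤ log m := log_nonneg hm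
  have hinv : m ^ β₁ * m ^ (-(β₁ + 1)) = m⁻¹ := by
    rw [← rpow_add hm₀, show β₁ + -(β₁ + 1) = -1 by ring, rpow_neg_one]
  have hshift : m ^ (L * m ^ (-(β₁ + 1))) ≤ exp (L * (log m / m)) := by
    have : m ^ (-(β₁ + 1)) ≤ m⁻¹ := by
      rw [← rpow_neg_one]
      exact rpow_le_rpow_of_exponent_le hm (by linarith)
    rw [rpow_def_of_pos hm₀, exp_le_exp, div_eq_mul_inv]
    nlinarith [mul_le_mul_of_nonneg_left this (mul_nonneg hL hlog₀)]
  calc α * m ^ (β₁ + L * m ^ (-(β₁ + 1)))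
      = α * m ^ β₁ + α * (m ^ β₁ * (m ^ (L * m ^ (-(β₁ + 1))) - 1)) := by
        rw [rpow_add hm₀]; ring
    _ ≤ α * m ^ β₁ + α * (m ^ β₁ *
          (L * m ^ (-(β₁ + 1)) * log m * m ^ (L * m ^ (-(β₁ + 1))))) := by
        gcongr
        exact rpow_sub_one_le_mul_log_mul_rpow hm₀ _
    _ = α * m ^ β₁ + α * (L * (log m / m)) * m ^ (L * m ^ (-(β₁ + 1))) := by
        rw [div_eq_mul_inv, ← hinv]; ring
    _ ≤ α * m ^ β₁ + 1 := by
        have := mul_le_mul_of_nonneg_left hshift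
          (mul_nonneg hα (mul_nonneg hL (div_nonneg hlog₀ hm₀.le)))
        linarith

/-- Two-sided Laplace-type bound for `∫_a^b m^{-2ν(u)} e^{-α(u) m^{β(u)}} du` when
`ν, α` are continuous with `ν₁ ≤ ν ≤ ν₂`, `0 < α₁ ≤ α ≤ α₂`, and `β` is continuously
differentiable, attaining its minimum value `β₁ = β(u*) > 0` at `u* ∈ [a,b]`:
for all sufficiently large real `m`,
`e⁻¹ m^{-(2ν₂+β₁+1)} e^{-α₂ m^{β₁}} ≤ ∫ ≤ (b-a) m^{-2ν₁} e^{-α₁ m^{β₁}}`. -/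
theorem stmt_11 (a b : ℝ) (hab : a < b) (ν α β β' : ℝ → ℝ)
    (ν₁ ν₂ α₁ α₂ β₁ ustar : ℝ) (hustar : ustar ∈ Set.Icc a b)
    (hνcont : ContinuousOn ν (Set.Icc a b)) (hαcont : ContinuousOn α (Set.Icc a b))
    (hν : ∀ u ∈ Set.Icc a b, ν₁ ≤ ν u ∧ ν u ≤ ν₂)
    (hα₁ : 0 < α₁) (hα : ∀ u ∈ Set.Icc a b, α₁ ≤ α u ∧ α u ≤ α₂)
    (hβderiv : ∀ u ∈ Set.Icc a b, HasDerivAt β (β' u) u)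
    (hβ'cont : ContinuousOn β' (Set.Icc a b))
    (hβmin : ∀ u ∈ Set.Icc a b, β₁ ≤ β u)
    (hβustar : β ustar = β₁) (hβ₁ : 0 < β₁) :
    ∃ m₀ : ℝ, ∀ m : ℝ, m₀ ≤ m →
      Real.exp (-1) * m ^ (-(2 * ν₂ + β₁ + 1)) * Real.exp (-α₂ * m ^ β₁) ≤
          (∫ u in a..b, m ^ (-(2 * ν u)) * Real.exp (-(α u) * m ^ (β u))) ∧
      (∫ u in a..b, m ^ (-(2 * ν u)) * Real.exp (-(α u) * m ^ (β u))) ≤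
          (b - a) * m ^ (-(2 * ν₁)) * Real.exp (-α₁ * m ^ β₁) := by
  have hα₂ : 0 < α₂ := hα₁.trans_le ((hα ustar hustar).1.trans (hα ustar hustar).2)
  obtain ⟨K, hK⟩ := exists_lipschitzOnWith_of_hasDerivAt (convex_Icc a b) isCompact_Icc
    hβderiv hβ'cont
  have hwidth := (tendsto_rpow_neg_atTop (by linarith : 0 < β₁ + 1)).eventually_le_const
    (sub_pos.2 hab)
  obtain ⟨m₀, hlarge⟩ := eventually_atTop.1 <| (eventually_ge_atTop 1).and <| hwidth.and <|
    eventually_mul_rpow_add_le hα₂.le hβ₁.le K.coe_nonneg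
  refine ⟨m₀, fun m hm => ?_⟩
  obtain ⟨hm₁, hδ, hgap⟩ := hlarge m hm
  have hm₀ : 0 < m := one_pos.trans_le hm₁
  have hf : ContinuousOn (fun u => m ^ (-(2 * ν u)) * exp (-(α u) * m ^ (β u))) (Icc a b) :=
    ((continuous_const_rpow hm₀.ne').comp_continuousOn (continuousOn_const.mul hνcont).neg).mul
      (hαcont.neg.mul ((continuous_const_rpow hm₀.ne').comp_continuousOn hK.continuousOn)).rexp
  constructor
  · obtain ⟨c, hc⟩ := exists_Icc_subset_inter_closedBall hustar hδ
    calc exp (-1) * m ^ (-(2 * ν₂ + β₁ + 1)) * exp (-α₂ * m ^ β₁)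
        = m ^ (-(β₁ + 1)) * (exp (-1) * m ^ (-(2 * ν₂)) * exp (-α₂ * m ^ β₁)) := by
          rw [show -(2 * ν₂ + β₁ + 1) = -(β₁ + 1) + -(2 * ν₂) by ring, rpow_add hm₀]; ring
      _ ≤ _ := mul_le_integral_of_le_on_Icc (by positivity) (hc.trans inter_subset_left)
          (hf.intervalIntegrable_of_Icc hab.le) (fun u _ => by positivity) fun u hu => ?_
    obtain ⟨hu, hdist⟩ := hc hu
    have hβu := hβustar ▸ hK.le_add_mul_of_dist_le hu hustar hdist
    exact exp_neg_one_mul_rpow_mul_exp_le hm₁ (hν u hu).2 (hα u hu).2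
      (hgap.trans' (by gcongr))
  · rw [mul_assoc]
    refine integral_le_mul_of_abs_le hab.le fun u hu => ?_
    rw [abs_of_pos (by positivity)]
    exact rpow_mul_exp_le_rpow_mul_exp hm₁ (hν u hu).1 hα₁.le (hα u hu).1 (hβmin u hu)
end

section
/- Let a < b be real numbers, let k ≥ 1 be an integer, and let ν : [a, b] → ℝ be k-times continuously differentiable, attaining its minimum over [a, b] at a unique point u* ∈ [a, b], with ν^{(s)}(u*) = 0 for s = 1, …, k−1 and ν^{(k)}(u*) ≠ 0. Then there exist constants C₁ > 0, C₂ > 0 and a real number m₀ ≥ 2 such that for every real m ≥ m₀, C₁·m^{−2ν(u*)}·(ln m)^{−1/k} ≤ ∫_a^b m^{−2ν(u)} du ≤ C₂·m^{−2ν(u*)}·(ln m)^{−1/k}. -/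
/-!
Write `m ^ (-2ν u) = m ^ (-2ν u*) * exp (-λ (ν u - ν u*))` with `λ = 2 ln m`. Iterating the
mean value theorem down from the `k`-th derivative gives
`|ν u - ν u* - D (u - u*)^k / k!| ≤ ε |u - u*|^k` wherever `|ν^(k) - D| ≤ ε`. With `D = 0`
this bounds `ν u - ν u*` above by `C |u - u*|^k`; with `D = ν^(k)(u*)` and minimality it bounds
it below by `c |u - u*|^k` near `u*`, and compactness together with uniqueness of the minimiser
extends the lower bound to all of `[a, b]`. Then `∫ exp (-λ c |t|^k) dt = 2 Γ(1/k + 1) (λ c)^(-1/k)`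
over `ℝ`, while `exp (-λ C |u - u*|^k) ≥ e⁻¹` on an interval of length `(λ C)^(-1/k)` that fits
in `[a, b]` once `m` is large.
-/

open Set Real MeasureTheory
open scoped Nat

section Taylor

variable {s : Set ℝ} {x₀ y : ℝ}

lemma Convex.abs_sub_le_mul_abs_sub_pow_succ (hs : Convex ℝ s) (hx₀ : x₀ ∈ s) {f f' : ℝ → ℝ}
    (hf : ∀ x ∈ s, HasDerivWithinAt f (f' x) s x) {C : ℝ} (hC : 0 ≤ C) {n : ℕ}
    (hf' : ∀ x ∈ s, |f' x| ≤ C * |x - x₀| ^ n) (hy : y ∈ s) :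
    |f y - f x₀| ≤ C * |y - x₀| ^ (n + 1) := by
  have hsub : uIcc x₀ y ⊆ s := hs.ordConnected.uIcc_subset hx₀ hy
  have := norm_image_sub_le_of_norm_hasDerivWithin_le (C := C * |y - x₀| ^ n)
    (fun x hx => (hf x (hsub hx)).mono hsub)
    (fun x hx => (hf' x (hsub hx)).trans <| mul_le_mul_of_nonneg_left
      (pow_le_pow_left₀ (abs_nonneg _) (abs_sub_left_of_mem_uIcc hx) n) hC)
    (convex_uIcc x₀ y) left_mem_uIcc right_mem_uIcc
  simpa only [Real.norm_eq_abs, pow_succ, mul_assoc] using this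

lemma hasDerivAt_mul_sub_pow_succ_div_factorial (D x₀ x : ℝ) (n : ℕ) :
    HasDerivAt (fun y => D * (y - x₀) ^ (n + 1) / (n + 1)!) (D * (x - x₀) ^ n / n !) x := by
  refine (((((hasDerivAt_id' x).sub_const x₀).pow (n + 1)).const_mul D).div_const
    ((n + 1)! : ℝ)).congr_deriv ?_
  rw [Nat.factorial_succ, Nat.add_sub_cancel]
  push_cast
  field_simp

lemma Convex.abs_sub_sub_mul_pow_succ_div_factorial_le (hs : Convex ℝ s) (hx₀ : x₀ ∈ s)
    {f f' : ℝ → ℝ}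
    (hf : ∀ x ∈ s, HasDerivWithinAt f (f' x) s x) {D ε : ℝ} (hε : 0 ≤ ε) {n : ℕ}
    (hf' : ∀ x ∈ s, |f' x - D * (x - x₀) ^ n / n !| ≤ ε * |x - x₀| ^ n) (hy : y ∈ s) :
    |f y - f x₀ - D * (y - x₀) ^ (n + 1) / (n + 1)!| ≤ ε * |y - x₀| ^ (n + 1) := by
  have := hs.abs_sub_le_mul_abs_sub_pow_succ hx₀
    (f := fun y => f y - D * (y - x₀) ^ (n + 1) / (n + 1)!)
    (fun x hx =>
      (hf x hx).sub (hasDerivAt_mul_sub_pow_succ_div_factorial D x₀ x n).hasDerivWithinAt)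
    hε hf' hy
  convert this using 2
  ring

theorem Convex.abs_sub_sub_mul_pow_succ_div_factorial_le_of_hasDerivWithinAt (hs : Convex ℝ s)
    (hx₀ : x₀ ∈ s) {n : ℕ} {g : ℕ → ℝ → ℝ}
    (hg : ∀ j ≤ n, ∀ x ∈ s, HasDerivWithinAt (g j) (g (j + 1) x) s x)
    (hg₀ : ∀ j, 1 ≤ j → j ≤ n → g j x₀ = 0) {D ε : ℝ}
    (hbound : ∀ x ∈ s, |g (n + 1) x - D| ≤ ε) (hy : y ∈ s) :
    |g 0 y - g 0 x₀ - D * (y - x₀) ^ (n + 1) / (n + 1)!| ≤ ε * |y - x₀| ^ (n + 1) := by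
  have hε : 0 ≤ ε := (abs_nonneg _).trans (hbound x₀ hx₀)
  induction n generalizing g y with
  | zero =>
    exact hs.abs_sub_sub_mul_pow_succ_div_factorial_le hx₀ (hg 0 le_rfl) hε
      (by simpa using hbound) hy
  | succ n ih =>
    refine hs.abs_sub_sub_mul_pow_succ_div_factorial_le hx₀ (hg 0 n.succ.zero_le) hε
      (fun x hx => ?_) hy
    have := ih (g := fun j => g (j + 1)) (fun j hj => hg (j + 1) (by omega))
      (fun j hj₁ hj => hg₀ (j + 1) (by omega) (by omega)) hbound hx
    rwa [hg₀ 1 le_rfl (by omega), sub_zero] at this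

end Taylor

section IteratedDeriv

variable {ν : ℝ → ℝ} {s : Set ℝ} {x₀ y : ℝ} {k : ℕ}

lemma ContDiffOn.hasDerivWithinAt_iteratedDerivWithin (hν : ContDiffOn ℝ k ν s)
    (hs : UniqueDiffOn ℝ s) {j : ℕ} (hj : j < k) {x : ℝ} (hx : x ∈ s) :
    HasDerivWithinAt (iteratedDerivWithin j ν s) (iteratedDerivWithin (j + 1) ν s x) s x := by
  rw [iteratedDerivWithin_succ]
  exact (hν.differentiableOn_iteratedDerivWithin (mod_cast hj) hs x hx).hasDerivWithinAt

lemma ContDiffOn.abs_sub_sub_mul_pow_div_factorial_le (hν : ContDiffOn ℝ k ν s) (hk : 1 ≤ k)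
    (hs : UniqueDiffOn ℝ s) {t : Set ℝ} (ht : Convex ℝ t) (hts : t ⊆ s) (hx₀ : x₀ ∈ t)
    (hders : ∀ j, 1 ≤ j → j ≤ k - 1 → iteratedDerivWithin j ν s x₀ = 0) {D ε : ℝ}
    (hbound : ∀ x ∈ t, |iteratedDerivWithin k ν s x - D| ≤ ε) (hy : y ∈ t) :
    |ν y - ν x₀ - D * (y - x₀) ^ k / k !| ≤ ε * |y - x₀| ^ k := by
  obtain ⟨n, rfl⟩ := Nat.exists_eq_add_of_le' hk
  simpa only [iteratedDerivWithin_zero] using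
    ht.abs_sub_sub_mul_pow_succ_div_factorial_le_of_hasDerivWithinAt hx₀
    (g := fun j => iteratedDerivWithin j ν s)
    (fun j hj x hx => (hν.hasDerivWithinAt_iteratedDerivWithin hs (by omega) (hts hx)).mono hts)
    (fun j hj₁ hj => hders j hj₁ (by omega)) hbound hy

lemma ContDiffOn.exists_sub_le_mul_pow {a b : ℝ} (hab : a < b) (hν : ContDiffOn ℝ k ν (Icc a b))
    (hk : 1 ≤ k) (hx₀ : x₀ ∈ Icc a b)
    (hders : ∀ j, 1 ≤ j → j ≤ k - 1 → iteratedDerivWithin j ν (Icc a b) x₀ = 0) :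
    ∃ C > 0, ∀ u ∈ Icc a b, ν u - ν x₀ ≤ C * |u - x₀| ^ k := by
  obtain ⟨C, hC⟩ := isCompact_Icc.exists_bound_of_continuousOn
    (hν.continuousOn_iteratedDerivWithin le_rfl (uniqueDiffOn_Icc hab))
  refine ⟨max C 1, by positivity, fun u hu => ?_⟩
  have := hν.abs_sub_sub_mul_pow_div_factorial_le hk (uniqueDiffOn_Icc hab) (convex_Icc a b)
    subset_rfl hx₀ hders (D := 0) (ε := max C 1)
    (fun x hx => by simpa using (hC x hx).trans (le_max_left C 1)) hu
  simpa using (le_abs_self _).trans this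

lemma half_abs_le_of_abs_sub_le {x T : ℝ} (hx : 0 ≤ x) (h : |x - T| ≤ |T| / 2) : |T| / 2 ≤ x := by
  rw [abs_le] at h
  cases abs_cases T <;> linarith

lemma ContDiffOn.exists_mul_pow_le_sub_of_abs_sub_lt {a b : ℝ} (hab : a < b)
    (hν : ContDiffOn ℝ k ν (Icc a b)) (hk : 1 ≤ k) (hx₀ : x₀ ∈ Icc a b)
    (hmin : ∀ u ∈ Icc a b, ν x₀ ≤ ν u)
    (hders : ∀ j, 1 ≤ j → j ≤ k - 1 → iteratedDerivWithin j ν (Icc a b) x₀ = 0)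
    (hkder : iteratedDerivWithin k ν (Icc a b) x₀ ≠ 0) :
    ∃ c > 0, ∃ δ > 0, ∀ u ∈ Icc a b, |u - x₀| < δ → c * |u - x₀| ^ k ≤ ν u - ν x₀ := by
  set D := iteratedDerivWithin k ν (Icc a b) x₀
  set ε := |D| / (2 * k !)
  have hε : 0 < ε := by positivity
  have hcont := hν.continuousOn_iteratedDerivWithin le_rfl (uniqueDiffOn_Icc hab) x₀ hx₀
  obtain ⟨δ, hδ, hball⟩ := Metric.mem_nhdsWithin_iff.1 (Metric.tendsto_nhds.1 hcont ε hε)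
  refine ⟨ε, hε, δ, hδ, fun u hu hud => ?_⟩
  have htaylor := hν.abs_sub_sub_mul_pow_div_factorial_le hk (uniqueDiffOn_Icc hab)
    ((convex_ball x₀ δ).inter (convex_Icc a b)) inter_subset_right
    ⟨Metric.mem_ball_self hδ, hx₀⟩ hders (D := D) (ε := ε)
    (fun x hx => by simpa only [mem_ofPred_eq, Real.dist_eq] using (hball hx).le)
    ⟨by simpa [Real.dist_eq] using hud, hu⟩
  have hT : |D * (u - x₀) ^ k / k !| / 2 = ε * |u - x₀| ^ k := by
    rw [abs_div, abs_mul, abs_pow, Nat.abs_cast]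
    ring
  rw [← hT] at htaylor ⊢
  exact half_abs_le_of_abs_sub_le (sub_nonneg.2 (hmin u hu)) htaylor

end IteratedDeriv

lemma IsCompact.exists_mul_pow_le {K : Set ℝ} (hK : IsCompact K) {f : ℝ → ℝ}
    (hf : ContinuousOn f K) {x₀ : ℝ} (hpos : ∀ x ∈ K, x ≠ x₀ → 0 < f x) {c₁ δ : ℝ} {k : ℕ}
    (hc₁ : 0 < c₁) (hδ : 0 < δ) (hloc : ∀ x ∈ K, |x - x₀| < δ → c₁ * |x - x₀| ^ k ≤ f x) :
    ∃ c > 0, ∀ x ∈ K, c * |x - x₀| ^ k ≤ f x := by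
  have hfar : ∀ x, δ ≤ |x - x₀| → 0 < |x - x₀| ^ k := fun x hx => pow_pos (hδ.trans_le hx) k
  obtain ⟨c₂, hc₂, hc₂f⟩ := (hK.inter_right (isClosed_le continuous_const
    (continuous_sub_right x₀).abs)).exists_forall_le' (f := fun x => f x / |x - x₀| ^ k)
    ((hf.mono inter_subset_left).div (by fun_prop) fun x hx => (hfar x hx.2).ne')
    fun x hx => div_pos (hpos x hx.1 fun h => by
      linarith [show δ ≤ 0 by simpa [h] using hx.2]) (hfar x hx.2)
  refine ⟨min c₁ c₂, lt_min hc₁ hc₂, fun x hx => ?_⟩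
  rcases lt_or_ge |x - x₀| δ with hnear | hfar'
  · exact (mul_le_mul_of_nonneg_right (min_le_left _ _) (by positivity)).trans (hloc x hx hnear)
  · refine (mul_le_mul_of_nonneg_right (min_le_right _ _) (by positivity)).trans ?_
    exact (le_div_iff₀ (hfar x hfar')).1 (hc₂f x ⟨hx, hfar'⟩)

lemma ContDiffOn.exists_mul_pow_le_sub {ν : ℝ → ℝ} {a b x₀ : ℝ} {k : ℕ} (hab : a < b)
    (hν : ContDiffOn ℝ k ν (Icc a b)) (hk : 1 ≤ k) (hx₀ : x₀ ∈ Icc a b)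
    (hmin : ∀ u ∈ Icc a b, ν x₀ ≤ ν u) (huniq : ∀ u ∈ Icc a b, ν u = ν x₀ → u = x₀)
    (hders : ∀ j, 1 ≤ j → j ≤ k - 1 → iteratedDerivWithin j ν (Icc a b) x₀ = 0)
    (hkder : iteratedDerivWithin k ν (Icc a b) x₀ ≠ 0) :
    ∃ c > 0, ∀ u ∈ Icc a b, c * |u - x₀| ^ k ≤ ν u - ν x₀ := by
  obtain ⟨c₁, hc₁, δ, hδ, hloc⟩ :=
    hν.exists_mul_pow_le_sub_of_abs_sub_lt hab hk hx₀ hmin hders hkder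
  exact isCompact_Icc.exists_mul_pow_le (hν.continuousOn.sub continuousOn_const)
    (fun u hu hne => sub_pos.2 ((hmin u hu).lt_of_ne fun h => hne (huniq u hu h.symm)))
    hc₁ hδ hloc

section Laplace

open Filter

variable {a b x₀ μ p : ℝ}

lemma integral_exp_neg_mul_abs_rpow (hμ : 0 < μ) (hp : 0 < p) :
    ∫ t, exp (-(μ * |t| ^ p)) = 2 * μ ^ (-(1 / p)) * Gamma (1 / p + 1) := by
  rw [integral_comp_abs (f := fun t => exp (-(μ * t ^ p)))]
  simp only [← neg_mul]
  rw [integral_exp_neg_mul_rpow hp hμ, neg_div, mul_assoc]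

lemma intervalIntegral_exp_neg_mul_abs_sub_rpow_le (hab : a ≤ b) (hμ : 0 < μ) (hp : 0 < p) :
    ∫ u in a..b, exp (-(μ * |u - x₀| ^ p)) ≤ 2 * μ ^ (-(1 / p)) * Gamma (1 / p + 1) := by
  -- a Bochner integral that is nonzero is that of an integrable function
  have hint : Integrable fun t : ℝ => exp (-(μ * |t| ^ p)) := .of_integral_ne_zero <| by
    rw [integral_exp_neg_mul_abs_rpow hμ hp]
    have := Gamma_pos_of_pos (by positivity : 0 < 1 / p + 1)
    positivity
  rw [intervalIntegral.integral_of_le hab, ← integral_exp_neg_mul_abs_rpow hμ hp,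
    ← integral_sub_right_eq_self (fun t => exp (-(μ * |t| ^ p))) x₀]
  exact setIntegral_le_integral (hint.comp_sub_right x₀)
    (Eventually.of_forall fun _ => (exp_pos _).le)

lemma intervalIntegral_exp_neg_mul_le {f : ℝ → ℝ} {c : ℝ} (hab : a ≤ b) (hμ : 0 < μ)
    (hp : 0 < p) (hc : 0 < c) (hf : ∀ u ∈ Icc a b, c * |u - x₀| ^ p ≤ f u) :
    ∫ u in a..b, exp (-(μ * f u)) ≤ 2 * (μ * c) ^ (-(1 / p)) * Gamma (1 / p + 1) := by
  refine le_trans ?_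
    (intervalIntegral_exp_neg_mul_abs_sub_rpow_le (x₀ := x₀) hab (mul_pos hμ hc) hp)
  rw [intervalIntegral.integral_of_le hab, intervalIntegral.integral_of_le hab]
  refine integral_mono_of_nonneg (Eventually.of_forall fun _ => (exp_pos _).le)
    (Continuous.integrableOn_Ioc (by have := hp.le; fun_prop)) ?_
  filter_upwards [ae_restrict_mem measurableSet_Ioc] with u hu
  rw [exp_le_exp, mul_assoc, neg_le_neg_iff]
  exact mul_le_mul_of_nonneg_left (hf u (Ioc_subset_Icc_self hu)) hμ.le

lemma le_intervalIntegral_exp_neg_mul {f : ℝ → ℝ} {C : ℝ} (hf : ContinuousOn f (Icc a b))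
    (hx₀ : x₀ ∈ Icc a b) (hμ : 0 < μ) (hp : 0 < p) (hC : 0 < C)
    (hfC : ∀ u ∈ Icc a b, f u ≤ C * |u - x₀| ^ p) (hlen : 1 ≤ μ * C * (b - a) ^ p) :
    exp (-1) * (μ * C) ^ (-(1 / p)) ≤ ∫ u in a..b, exp (-(μ * f u)) := by
  set ℓ := (μ * C) ^ (-(1 / p))
  have hℓ : 0 ≤ ℓ := by positivity
  have hℓp : μ * C * ℓ ^ p = 1 := by
    rw [← rpow_mul (by positivity), neg_mul, one_div_mul_cancel hp.ne', rpow_neg_one,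
      mul_inv_cancel₀ (by positivity)]
  have hℓb : ℓ ≤ b - a := by
    rw [← rpow_le_rpow_iff hℓ (by linarith [hx₀.1, hx₀.2]) hp]
    nlinarith [mul_pos hμ hC]
  -- an interval of length ℓ inside [a, b] on which |u - x₀| ≤ ℓ
  set q := max a (x₀ - ℓ)
  have hqb : q + ℓ ≤ b := by
    have := max_le (by linarith : a ≤ b - ℓ) (by linarith [hx₀.2] : x₀ - ℓ ≤ b - ℓ)
    linarith
  have hint : IntervalIntegrable (fun u => exp (-(μ * f u))) volume a b :=
    (continuous_exp.comp_continuousOn ((hf.const_smul μ).neg)).intervalIntegrable_of_Icc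
      (by linarith [hx₀.1, hx₀.2])
  calc exp (-1) * ℓ = ∫ _ in q..q + ℓ, exp (-1) := by simp [mul_comm]
    _ ≤ ∫ u in q..q + ℓ, exp (-(μ * f u)) := by
      refine intervalIntegral.integral_mono_on (by linarith) intervalIntegrable_const
        (hint.mono_set ?_) fun u hu => ?_
      · rw [uIcc_of_le (by linarith [hx₀.1, hx₀.2]), uIcc_of_le (by linarith)]
        exact Icc_subset_Icc (le_max_left _ _) hqb
      · have hua : u ∈ Icc a b := ⟨(le_max_left _ _).trans hu.1, hu.2.trans hqb⟩
        have hqx : q ≤ x₀ := max_le hx₀.1 (by linarith)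
        have hux : |u - x₀| ≤ ℓ :=
          abs_le.2 ⟨by linarith [(le_max_right a (x₀ - ℓ)).trans hu.1], by linarith [hu.2]⟩
        have := mul_le_mul_of_nonneg_left ((hfC u hua).trans (mul_le_mul_of_nonneg_left
          (rpow_le_rpow (abs_nonneg _) hux hp.le) hC.le)) hμ.le
        rw [exp_le_exp]
        linarith
    _ ≤ ∫ u in a..b, exp (-(μ * f u)) :=
      intervalIntegral.integral_mono_interval (le_max_left _ _) (by linarith) hqb
        (Eventually.of_forall fun _ => (exp_pos _).le) hint

end Laplace

/-- Laplace-method asymptotic `∫_a^b m^{-2ν(u)} du ≍ m^{-2ν(u*)} (ln m)^{-1/k}`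
when `ν` is `k`-times continuously differentiable on `[a,b]`, attains its minimum
at a unique point `u*`, and `k ≥ 1` is the order of the first nonvanishing
derivative of `ν` at `u*`. -/
theorem stmt_12 (a b : ℝ) (hab : a < b) (k : ℕ) (hk : 1 ≤ k) (ν : ℝ → ℝ)
    (hν : ContDiffOn ℝ k ν (Set.Icc a b))
    (ustar : ℝ) (hustar : ustar ∈ Set.Icc a b)
    (hmin : ∀ u ∈ Set.Icc a b, ν ustar ≤ ν u)
    (huniq : ∀ u ∈ Set.Icc a b, ν u = ν ustar → u = ustar)
    (hders : ∀ s : ℕ, 1 ≤ s → s ≤ k - 1 →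
      iteratedDerivWithin s ν (Set.Icc a b) ustar = 0)
    (hkder : iteratedDerivWithin k ν (Set.Icc a b) ustar ≠ 0) :
    ∃ C₁ > (0:ℝ), ∃ C₂ > (0:ℝ), ∃ m₀ : ℝ, 2 ≤ m₀ ∧ ∀ m : ℝ, m₀ ≤ m →
      C₁ * m ^ (-(2 * ν ustar)) * Real.log m ^ (-(1 / (k : ℝ))) ≤
          (∫ u in a..b, m ^ (-(2 * ν u))) ∧
      (∫ u in a..b, m ^ (-(2 * ν u))) ≤
          C₂ * m ^ (-(2 * ν ustar)) * Real.log m ^ (-(1 / (k : ℝ))) := by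
  obtain ⟨C, hC, hνC⟩ := hν.exists_sub_le_mul_pow hab hk hustar hders
  obtain ⟨c, hc, hcν⟩ := hν.exists_mul_pow_le_sub hab hk hustar hmin huniq hders hkder
  have hk' : (0 : ℝ) < k := by exact_mod_cast hk
  refine ⟨exp (-1) * (2 * C) ^ (-(1 / (k : ℝ))), by positivity,
    2 * (2 * c) ^ (-(1 / (k : ℝ))) * Gamma (1 / k + 1),
    mul_pos (by positivity) (Gamma_pos_of_pos (by positivity)),
    max 2 (exp (2 * C * (b - a) ^ (k : ℝ))⁻¹), le_max_left _ _, fun m hm => ?_⟩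
  have hm2 : 2 ≤ m := (le_max_left _ _).trans hm
  set L := log m with hLm
  have hL : 0 < L := log_pos (by linarith)
  have hLC : 1 ≤ 2 * L * C * (b - a) ^ (k : ℝ) := by
    have := (le_log_iff_exp_le (by linarith)).2 ((le_max_right _ _).trans hm)
    rw [inv_le_iff_one_le_mul₀ (by positivity)] at this
    linarith
  have hsplit : ∫ u in a..b, m ^ (-(2 * ν u)) =
      m ^ (-(2 * ν ustar)) * ∫ u in a..b, exp (-(2 * L * (ν u - ν ustar))) := by
    rw [← intervalIntegral.integral_const_mul]
    congr 1 with u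
    rw [rpow_def_of_pos (by linarith), rpow_def_of_pos (by linarith), ← exp_add, ← hLm]
    ring_nf
  have hscale (x : ℝ) (hx : 0 < x) :
      (2 * L * x) ^ (-(1 / (k : ℝ))) = (2 * x) ^ (-(1 / (k : ℝ))) * L ^ (-(1 / (k : ℝ))) := by
    rw [mul_right_comm, mul_rpow (by positivity) hL.le]
  have hmpos : 0 < m ^ (-(2 * ν ustar)) := rpow_pos_of_pos (by linarith) _
  rw [hsplit]
  constructor
  · have := le_intervalIntegral_exp_neg_mul (f := fun u => ν u - ν ustar)
      (hν.continuousOn.sub continuousOn_const) hustar (by positivity : 0 < 2 * L) hk' hC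
      (fun u hu => by simpa [rpow_natCast] using hνC u hu) hLC
    rw [hscale C hC] at this
    linarith [mul_le_mul_of_nonneg_left this hmpos.le]
  · have := intervalIntegral_exp_neg_mul_le hab.le (by positivity : 0 < 2 * L) hk' hc
      (fun u hu => by simpa [rpow_natCast] using hcν u hu)
    rw [hscale c hc] at this
    linarith [mul_le_mul_of_nonneg_left this hmpos.le]
end

section
/- Let v : [0, 1] → ℝ be continuously differentiable with |v′(x)| ≤ v₀ for all x ∈ [0, 1], where v₀ > 0, and let v* = min_{x ∈ [0,1]} v(x). Then there exist a constant K > 0 and a real number m₀ ≥ 3, both depending only on v₀, such that for every real m ≥ m₀, every even integer M ≥ 2 and every d ∈ [0, 1]: (1/M) Σ_{l=1}^{M} m^{−2·v((l − 1 + d)/M)} ≥ K · m^{−2v*} · m^{−3v₀/M} · ( (ln m)^{−1} + M^{−1} ). -/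
/-!
Let `x*` be a minimiser of `v`; the derivative bound makes `v` `v₀`-Lipschitz. Among the grid
points (spacing `1/M`) there are `n = max 1 ⌊M / ln m⌋` within distance `n/M ≤ 1/M + 1/ln m` of
`x*`, and there `m^{-2v} ≥ m^{-2v*} m^{-2v₀/M} m^{-2v₀/ln m}`, where `m^{-2v₀/ln m} = e^{-2v₀}`
does not depend on `m`. These `n` terms alone give the bound, since `n/M ≥ (1/ln m + 1/M)/3`.
-/

open Real

lemma abs_sub_le_mul_abs_sub_of_abs_deriv_le {f f' : ℝ → ℝ} {s : Set ℝ} {C : ℝ}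
    (hs : Convex ℝ s) (hf : ∀ x ∈ s, HasDerivAt f (f' x) x) (hf' : ∀ x ∈ s, |f' x| ≤ C)
    {x y : ℝ} (hx : x ∈ s) (hy : y ∈ s) : |f x - f y| ≤ C * |x - y| :=
  hs.norm_image_sub_le_of_norm_hasDerivWithin_le (fun z hz => (hf z hz).hasDerivWithinAt)
    hf' hy hx

lemma exists_nat_window {M n : ℕ} (hn : 1 ≤ n) (hnM : n ≤ M) {c : ℝ} (hc : 0 ≤ c)
    (hcM : c ≤ M + 1) : ∃ a : ℕ, 1 ≤ a ∧ a + n ≤ M + 1 ∧ c - n ≤ a ∧ (a : ℝ) ≤ c + 1 := by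
  refine ⟨max 1 (min ⌊c⌋₊ (M + 1 - n)), by omega, by omega, ?_, ?_⟩
  · have hn' : (1 : ℝ) ≤ n := by exact_mod_cast hn
    have hnM' : ((M + 1 - n : ℕ) : ℝ) = M + 1 - n := by
      push_cast [Nat.cast_sub (by omega : n ≤ M + 1)]
      ring
    have := Nat.sub_one_lt_floor c
    push_cast [hnM']
    exact le_max_of_le_right (le_min (by linarith) (by linarith))
  · push_cast
    exact max_le (by linarith) (min_le_of_left_le (Nat.floor_le hc |>.trans (by linarith)))

lemma grid_mem_Icc {M l : ℕ} (hl : l ∈ Finset.Icc 1 M) {d : ℝ} (hd : d ∈ Set.Icc (0 : ℝ) 1) :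
    ((l : ℝ) - 1 + d) / M ∈ Set.Icc (0 : ℝ) 1 := by
  obtain ⟨hl₁, hlM⟩ := Finset.mem_Icc.1 hl
  have hl₁' : (1 : ℝ) ≤ l := by exact_mod_cast hl₁
  have hlM' : (l : ℝ) ≤ M := by exact_mod_cast hlM
  have hM : (0 : ℝ) < M := by linarith
  exact ⟨by have := hd.1; positivity, (div_le_one hM).2 (by linarith [hd.2])⟩

lemma exists_grid_points_near {M n : ℕ} (hn : 1 ≤ n) (hnM : n ≤ M) {d x : ℝ}
    (hd : d ∈ Set.Icc (0 : ℝ) 1) (hx : x ∈ Set.Icc (0 : ℝ) 1) :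
    ∃ S ⊆ Finset.Icc 1 M, S.card = n ∧ ∀ l ∈ S, |((l : ℝ) - 1 + d) / M - x| ≤ n / M := by
  have hM : (0 : ℝ) < M := by exact_mod_cast hn.trans hnM
  obtain ⟨a, ha, haM, hca, hac⟩ := exists_nat_window hn hnM (c := x * M + 1 - d)
    (by nlinarith [hx.1, hd.2]) (by nlinarith [hx.2, hd.1])
  refine ⟨Finset.Ico a (a + n), fun l hl => ?_, by simp, fun l hl => ?_⟩ <;>
    obtain ⟨hal, hla⟩ := Finset.mem_Ico.1 hl
  · exact Finset.mem_Icc.2 ⟨by omega, by omega⟩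
  · have hal' : (a : ℝ) ≤ l := by exact_mod_cast hal
    have hla' : (l : ℝ) + 1 ≤ a + n := by exact_mod_cast hla
    rw [show ((l : ℝ) - 1 + d) / M - x = (l - (x * M + 1 - d)) / M by field_simp; ring,
      abs_div, abs_of_pos hM]
    gcongr
    exact abs_le.2 ⟨by linarith, by linarith⟩

lemma max_one_floor_div_div_le {M L : ℝ} (hM : 0 < M) (hL : 0 < L) :
    ((max 1 ⌊M / L⌋₊ : ℕ) : ℝ) / M ≤ 1 / M + 1 / L := by
  rw [div_le_iff₀ hM, add_mul, div_mul_cancel₀ _ hM.ne', one_div_mul_eq_div]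
  push_cast
  exact max_le (by linarith [div_pos hM hL]) ((Nat.floor_le (by positivity)).trans (by linarith))

lemma inv_add_inv_le_three_mul_max_one_floor_div {M L : ℝ} (hM : 0 < M) :
    L⁻¹ + M⁻¹ ≤ 3 * ((max 1 ⌊M / L⌋₊ : ℕ) : ℝ) / M := by
  rw [le_div_iff₀ hM, add_mul, inv_mul_cancel₀ hM.ne', ← div_eq_inv_mul]
  have := Nat.lt_floor_add_one (M / L)
  push_cast
  linarith [le_max_left (1 : ℝ) ⌊M / L⌋₊, le_max_right (1 : ℝ) ⌊M / L⌋₊]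

lemma rpow_div_log_self {m : ℝ} (hm₀ : 0 < m) (hm₁ : m ≠ 1) (a : ℝ) :
    m ^ (a / log m) = exp a := by
  rw [rpow_def_of_pos hm₀, mul_div_cancel₀ _ (log_ne_zero.2 ⟨hm₀.ne', hm₁, by linarith⟩)]

lemma exp_mul_rpow_mul_rpow_le {m s y C M : ℝ} (hm : 1 < m) (hC : 0 ≤ C) (hM : 0 < M)
    (hy : y ≤ s + C * (1 / M + 1 / log m)) :
    exp (-(2 * C)) * m ^ (-(2 * s)) * m ^ (-(3 * C) / M) ≤ m ^ (-(2 * y)) := by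
  have hm₀ : 0 < m := by linarith
  calc exp (-(2 * C)) * m ^ (-(2 * s)) * m ^ (-(3 * C) / M)
      ≤ m ^ (-(2 * C) / log m) * m ^ (-(2 * s)) * m ^ (-(2 * C) / M) := by
        rw [rpow_div_log_self hm₀ hm.ne']
        gcongr
        · exact hm.le
        · linarith [div_nonneg hC hM.le]
    _ = m ^ (-(2 * (s + C * (1 / M + 1 / log m)))) := by
        rw [← rpow_add hm₀, ← rpow_add hm₀]
        ring_nf
    _ ≤ m ^ (-(2 * y)) := rpow_le_rpow_of_exponent_le hm.le (by linarith)

theorem stmt_13_general (v₀ : ℝ) :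
    ∃ K > (0:ℝ), ∃ m₀ : ℝ, 3 ≤ m₀ ∧
      ∀ v v' : ℝ → ℝ,
        (∀ x ∈ Set.Icc (0:ℝ) 1, HasDerivAt v (v' x) x) →
        ContinuousOn v' (Set.Icc (0:ℝ) 1) →
        (∀ x ∈ Set.Icc (0:ℝ) 1, |v' x| ≤ v₀) →
        ∀ vstar : ℝ, IsLeast (v '' Set.Icc (0:ℝ) 1) vstar →
        ∀ m : ℝ, m₀ ≤ m → ∀ M : ℕ, 2 ≤ M → Even M → ∀ d ∈ Set.Icc (0:ℝ) 1,
          (1 / (M : ℝ)) * ∑ l ∈ Finset.Icc 1 M, m ^ (-(2 * v (((l : ℝ) - 1 + d) / M)))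
            ≥ K * m ^ (-(2 * vstar)) * m ^ (-(3 * v₀) / M) *
                ((Real.log m)⁻¹ + (M : ℝ)⁻¹) := by
  refine ⟨exp (-(2 * v₀)) / 3, by positivity, 3, le_rfl, ?_⟩
  rintro v v' hv - hv' _ ⟨⟨xstar, hxstar, rfl⟩, -⟩ m hm M hM - d hd
  have hv₀ : 0 ≤ v₀ := (abs_nonneg _).trans (hv' 0 ⟨le_rfl, zero_le_one⟩)
  have hL : 1 ≤ log m := by rw [le_log_iff_exp_le (by linarith)]; linarith [exp_one_lt_three]
  have hM₀ : (0 : ℝ) < M := by positivity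
  set n := max 1 ⌊(M : ℝ) / log m⌋₊
  have hnM : n ≤ M := max_le (by omega) (Nat.floor_le_of_le (div_le_self (Nat.cast_nonneg M) hL))
  obtain ⟨S, hSM, hSn, hSnear⟩ := exists_grid_points_near (le_max_left _ _) hnM hd hxstar
  have hterm : ∀ l ∈ S, exp (-(2 * v₀)) * m ^ (-(2 * v xstar)) * m ^ (-(3 * v₀) / M)
      ≤ m ^ (-(2 * v (((l : ℝ) - 1 + d) / M))) := fun l hl => by
    have hlip := abs_sub_le_mul_abs_sub_of_abs_deriv_le (convex_Icc 0 1) hv hv'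
      (grid_mem_Icc (hSM hl) hd) hxstar
    refine exp_mul_rpow_mul_rpow_le (by linarith) hv₀ hM₀ ?_
    calc _ ≤ v xstar + v₀ * |((l : ℝ) - 1 + d) / M - xstar| := by linarith [(abs_le.1 hlip).2]
      _ ≤ v xstar + v₀ * (1 / M + 1 / log m) := by
        gcongr
        exact (hSnear l hl).trans (max_one_floor_div_div_le hM₀ (by linarith))
  have hsum := (S.card_nsmul_le_sum _ _ hterm).trans
    (Finset.sum_le_sum_of_subset_of_nonneg hSM fun l _ _ => (rpow_pos_of_pos (by linarith) _).le)
  rw [hSn, nsmul_eq_mul] at hsum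
  calc exp (-(2 * v₀)) / 3 * m ^ (-(2 * v xstar)) * m ^ (-(3 * v₀) / M) * ((log m)⁻¹ + (M : ℝ)⁻¹)
      ≤ exp (-(2 * v₀)) / 3 * m ^ (-(2 * v xstar)) * m ^ (-(3 * v₀) / M) * (3 * n / M) := by
        gcongr
        exact inv_add_inv_le_three_mul_max_one_floor_div hM₀
    _ = 1 / M * (n * (exp (-(2 * v₀)) * m ^ (-(2 * v xstar)) * m ^ (-(3 * v₀) / M))) := by
        field_simp
    _ ≤ _ := by gcongr

/-- Lower bound on the pseudo-uniform grid average of `m^{-2v}`: for `v : [0,1] → ℝ`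
continuously differentiable with `|v'| ≤ v₀` and minimum value `v*`, there exist
`K > 0` and `m₀ ≥ 3` depending only on `v₀` such that for all real `m ≥ m₀`, every
even integer `M ≥ 2` and every `d ∈ [0,1]`,
`(1/M) ∑_{l=1}^M m^{-2 v((l-1+d)/M)} ≥ K m^{-2v*} m^{-3v₀/M} ((ln m)⁻¹ + M⁻¹)`. -/
theorem stmt_13 (v₀ : ℝ) (hv₀ : 0 < v₀) :
    ∃ K > (0:ℝ), ∃ m₀ : ℝ, 3 ≤ m₀ ∧
      ∀ v v' : ℝ → ℝ,
        (∀ x ∈ Set.Icc (0:ℝ) 1, HasDerivAt v (v' x) x) →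
        ContinuousOn v' (Set.Icc (0:ℝ) 1) →
        (∀ x ∈ Set.Icc (0:ℝ) 1, |v' x| ≤ v₀) →
        ∀ vstar : ℝ, IsLeast (v '' Set.Icc (0:ℝ) 1) vstar →
        ∀ m : ℝ, m₀ ≤ m → ∀ M : ℕ, 2 ≤ M → Even M → ∀ d ∈ Set.Icc (0:ℝ) 1,
          (1 / (M : ℝ)) * ∑ l ∈ Finset.Icc 1 M, m ^ (-(2 * v (((l : ℝ) - 1 + d) / M)))
            ≥ K * m ^ (-(2 * vstar)) * m ^ (-(3 * v₀) / M) *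
                ((Real.log m)⁻¹ + (M : ℝ)⁻¹) :=
  stmt_13_general v₀
end

section
/- Let S : [0, 1] → ℝ be continuously differentiable with |S′(x)| ≤ s₂ for all x ∈ [0, 1], let ν : ℝ → ℝ be continuously differentiable with |ν′(u)| ≤ ν₀ for all u in the range of S, and set ν_min = min_{x ∈ [0,1]} ν(S(x)). Then for every real m ≥ 1, every d ∈ [0, 1] and every positive integer M: | (1/M) Σ_{l=1}^{M} m^{−2ν(S((l − 1 + d)/M))} − ∫_0^1 m^{−2ν(S(x))} dx | ≤ ν₀·s₂·(ln m)·m^{−2ν_min} / M. -/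
/-!
On a cell `[k/M, (k+1)/M]` containing the node `(k+d)/M`, an `L`-Lipschitz integrand differs from
its value at the node by at most `L |x - node|`, whose integral over the cell is at most
`L / (2M²)`; summing over the `M` cells gives the error bound `L / (2M)`. For the integrand
`m ^ (-2ν(S x))` the chain rule gives the derivative `ln m · (-2ν'(S x) S'(x)) · m ^ (-2ν(S x))`,
which is bounded by `L = 2 ν₀ s₂ ln m · m ^ (-2 ν_min)`.
-/

open MeasureTheory Set
open scoped NNReal

theorem integral_abs_sub_of_mem_Icc {a b c : ℝ} (hc : c ∈ Icc a b) :
    ∫ x in a..b, |x - c| = ((c - a) ^ 2 + (b - c) ^ 2) / 2 := by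
  have hleft : ∫ x in a..c, |x - c| = (c - a) ^ 2 / 2 := by
    rw [intervalIntegral.integral_congr (g := fun x => c - x) fun x hx => by
      rw [uIcc_of_le hc.1] at hx
      rw [abs_sub_comm, abs_of_nonneg (sub_nonneg.2 hx.2)]]
    rw [intervalIntegral.integral_comp_sub_left (fun x => x)]
    simp
  have hright : ∫ x in c..b, |x - c| = (b - c) ^ 2 / 2 := by
    rw [intervalIntegral.integral_congr (g := fun x => x - c) fun x hx => by
      rw [uIcc_of_le hc.2] at hx
      rw [abs_of_nonneg (sub_nonneg.2 hx.1)]]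
    simp
    ring
  have hint : ∀ p q : ℝ, IntervalIntegrable (fun x => |x - c|) volume p q := fun p q =>
    (continuous_id.sub continuous_const).abs.intervalIntegrable p q
  rw [← intervalIntegral.integral_add_adjacent_intervals (hint a c) (hint c b), hleft, hright]
  ring

theorem LipschitzOnWith.abs_integral_sub_mul_le {F : ℝ → ℝ} {K : ℝ≥0} {a b c : ℝ}
    (hF : LipschitzOnWith K F (Icc a b)) (hc : c ∈ Icc a b) :
    |(∫ x in a..b, F x) - (b - a) * F c| ≤ K * (b - a) ^ 2 / 2 := by
  have hab : a ≤ b := hc.1.trans hc.2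
  have hint : IntervalIntegrable F volume a b :=
    (hF.continuousOn.mono (uIcc_of_le hab).subset).intervalIntegrable
  have hdist : IntervalIntegrable (fun x => (K : ℝ) * |x - c|) volume a b :=
    (continuous_const.mul (continuous_id.sub continuous_const).abs).intervalIntegrable a b
  calc |(∫ x in a..b, F x) - (b - a) * F c|
      = |∫ x in a..b, (F x - F c)| := by
        rw [intervalIntegral.integral_sub hint intervalIntegrable_const,
          intervalIntegral.integral_const, smul_eq_mul]
    _ ≤ ∫ x in a..b, |F x - F c| := intervalIntegral.abs_integral_le_integral_abs hab
    _ ≤ ∫ x in a..b, (K : ℝ) * |x - c| := by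
        refine intervalIntegral.integral_mono_on hab (hint.sub intervalIntegrable_const).abs
          hdist fun x hx => ?_
        simpa only [← Real.dist_eq] using hF.dist_le_mul x hx c hc
    _ = K * ((c - a) ^ 2 + (b - c) ^ 2) / 2 := by
        rw [intervalIntegral.integral_const_mul, integral_abs_sub_of_mem_Icc hc, mul_div_assoc]
    _ ≤ K * (b - a) ^ 2 / 2 := by
        gcongr
        nlinarith [mul_nonneg (sub_nonneg.2 hc.1) (sub_nonneg.2 hc.2)]

theorem LipschitzOnWith.abs_riemannSum_sub_integral_le {F : ℝ → ℝ} {K : ℝ≥0}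
    (hF : LipschitzOnWith K F (Icc 0 1)) {d : ℝ} (hd : d ∈ Icc (0 : ℝ) 1) {M : ℕ} (hM : 0 < M) :
    |(1 / (M : ℝ)) * ∑ k ∈ Finset.range M, F ((k + d) / M) - ∫ x in (0 : ℝ)..1, F x| ≤
      K / (2 * M) := by
  have hMpos : (0 : ℝ) < M := Nat.cast_pos.2 hM
  have hcell : ∀ k < M, Icc ((k : ℝ) / M) ((k + 1 : ℕ) / M) ⊆ Icc 0 1 := fun k hk =>
    Icc_subset_Icc (by positivity) ((div_le_one hMpos).2 (by exact_mod_cast hk))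
  have hnode : ∀ k : ℕ, (k + d) / M ∈ Icc ((k : ℝ) / M) ((k + 1 : ℕ) / M) := fun k => by
    push_cast
    constructor <;> gcongr <;> linarith [hd.1, hd.2]
  have hlength : ∀ k : ℕ, ((k + 1 : ℕ) : ℝ) / M - k / M = 1 / M := fun k => by
    push_cast; ring
  have hsplit : ∫ x in (0 : ℝ)..1, F x =
      ∑ k ∈ Finset.range M, ∫ x in (k / M : ℝ)..((k + 1 : ℕ) / M), F x := by
    rw [intervalIntegral.sum_integral_adjacent_intervals fun k hk =>
      ((hF.mono (hcell k hk)).continuousOn.mono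
        (uIcc_of_le ((hnode k).1.trans (hnode k).2)).subset).intervalIntegrable]
    simp [hMpos.ne']
  calc _ = |∑ k ∈ Finset.range M,
          (1 / M * F ((k + d) / M) - ∫ x in (k / M : ℝ)..((k + 1 : ℕ) / M), F x)| := by
        rw [hsplit, Finset.mul_sum, ← Finset.sum_sub_distrib]
    _ ≤ ∑ _k ∈ Finset.range M, K * (1 / (M : ℝ)) ^ 2 / 2 := by
        refine (Finset.abs_sum_le_sum_abs _ _).trans (Finset.sum_le_sum fun k hk => ?_)
        rw [abs_sub_comm, ← hlength k]
        exact (hF.mono (hcell k (Finset.mem_range.1 hk))).abs_integral_sub_mul_le (hnode k)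
    _ = K / (2 * M) := by
        rw [Finset.sum_const, Finset.card_range, nsmul_eq_mul]
        field_simp

theorem lipschitzOnWith_const_rpow_of_hasDerivAt {s : Set ℝ} (hs : Convex ℝ s) {f f' : ℝ → ℝ}
    {m B fmax : ℝ} (hm : 1 ≤ m) (hf : ∀ x ∈ s, HasDerivAt f (f' x) x)
    (hf' : ∀ x ∈ s, |f' x| ≤ B) (hfmax : ∀ x ∈ s, f x ≤ fmax) :
    LipschitzOnWith (Real.log m * B * m ^ fmax).toNNReal (fun x => m ^ f x) s := by
  refine hs.lipschitzOnWith_of_nnnorm_hasDerivWithin_le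
    (fun x hx => ((hf x hx).const_rpow (zero_lt_one.trans_le hm)).hasDerivWithinAt) fun x hx => ?_
  rw [← NNReal.coe_le_coe, coe_nnnorm, Real.norm_eq_abs, abs_mul, abs_mul,
    abs_of_nonneg (Real.log_nonneg hm), abs_of_nonneg (Real.rpow_nonneg (zero_le_one.trans hm) _)]
  refine le_trans ?_ (Real.le_coe_toNNReal _)
  have hlog : Real.log m * |f' x| ≤ Real.log m * B :=
    mul_le_mul_of_nonneg_left (hf' x hx) (Real.log_nonneg hm)
  exact mul_le_mul hlog (Real.rpow_le_rpow_of_exponent_le hm (hfmax x hx))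
    (Real.rpow_nonneg (zero_le_one.trans hm) _)
    ((mul_nonneg (Real.log_nonneg hm) (abs_nonneg _)).trans hlog)

theorem Finset.sum_Icc_one_natCast_sub_one {β : Type*} [AddCommMonoid β] (g : ℝ → β) (M : ℕ) :
    ∑ l ∈ Finset.Icc 1 M, g ((l : ℝ) - 1) = ∑ k ∈ Finset.range M, g k := by
  rw [← Finset.Ico_add_one_right_eq_Icc, Finset.sum_Ico_eq_sum_range, add_tsub_cancel_right]
  refine Finset.sum_congr rfl fun k _ => ?_
  push_cast
  ring_nf

theorem stmt_16_general (S S' ν ν' : ℝ → ℝ) (s₂ ν₀ : ℝ)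
    (hS : ∀ x ∈ Set.Icc (0:ℝ) 1, HasDerivAt S (S' x) x)
    (hS'bd : ∀ x ∈ Set.Icc (0:ℝ) 1, |S' x| ≤ s₂)
    (hν : ∀ u ∈ S '' Set.Icc (0:ℝ) 1, HasDerivAt ν (ν' u) u)
    (hν'bd : ∀ u ∈ S '' Set.Icc (0:ℝ) 1, |ν' u| ≤ ν₀)
    (νmin : ℝ) (hνmin : IsLeast ((fun x => ν (S x)) '' Set.Icc (0:ℝ) 1) νmin)
    (m : ℝ) (hm : 1 ≤ m) (d : ℝ) (hd : d ∈ Set.Icc (0:ℝ) 1) (M : ℕ) (hM : 0 < M) :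
    |(1 / (M : ℝ)) * ∑ l ∈ Finset.Icc 1 M, m ^ (-(2 * ν (S (((l : ℝ) - 1 + d) / M)))) -
        ∫ x in (0:ℝ)..1, m ^ (-(2 * ν (S x)))| ≤
      ν₀ * s₂ * Real.log m * m ^ (-(2 * νmin)) / M := by
  have hexponent : ∀ x ∈ Icc (0 : ℝ) 1,
      HasDerivAt (fun x => -(2 * ν (S x))) (-(2 * (ν' (S x) * S' x))) x := fun x hx =>
    (((hν _ (mem_image_of_mem S hx)).comp x (hS x hx)).const_mul 2).neg
  have hexponent_deriv_bd : ∀ x ∈ Icc (0 : ℝ) 1, |-(2 * (ν' (S x) * S' x))| ≤ 2 * (ν₀ * s₂) := by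
    intro x hx
    have hν'x := hν'bd _ (mem_image_of_mem S hx)
    rw [abs_neg, abs_mul, abs_two, abs_mul]
    exact mul_le_mul_of_nonneg_left
      (mul_le_mul hν'x (hS'bd x hx) (abs_nonneg _) ((abs_nonneg _).trans hν'x)) two_pos.le
  have hlip :=
    lipschitzOnWith_const_rpow_of_hasDerivAt (convex_Icc 0 1) hm hexponent hexponent_deriv_bd
      fun x hx => neg_le_neg <|
        mul_le_mul_of_nonneg_left (hνmin.2 (mem_image_of_mem _ hx)) two_pos.le
  have hC : 0 ≤ Real.log m * (2 * (ν₀ * s₂)) * m ^ (-(2 * νmin)) := by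
    have hs₂ : 0 ≤ s₂ := (abs_nonneg _).trans (hS'bd 0 (left_mem_Icc.2 zero_le_one))
    have hν₀ : 0 ≤ ν₀ := (abs_nonneg _).trans
      (hν'bd _ (mem_image_of_mem S (left_mem_Icc.2 zero_le_one)))
    have := Real.log_nonneg hm
    positivity
  rw [Finset.sum_Icc_one_natCast_sub_one (fun t => m ^ (-(2 * ν (S ((t + d) / M))))) M]
  refine (hlip.abs_riemannSum_sub_integral_le hd hM).trans_eq ?_
  rw [Real.coe_toNNReal _ hC]
  field_simp

/-- Riemann-sum error bound for the pseudo-uniform grid average of `m^{-2ν(S(x))}`: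
if `S` is continuously differentiable on `[0,1]` with `|S'| ≤ s₂`, `ν` is continuously
differentiable on the range of `S` with `|ν'| ≤ ν₀`, and
`ν_min = min_{x ∈ [0,1]} ν(S(x))`, then for every real `m ≥ 1`, `d ∈ [0,1]` and
positive integer `M`,
`|(1/M) ∑_{l=1}^M m^{-2ν(S((l-1+d)/M))} - ∫_0^1 m^{-2ν(S(x))} dx|
  ≤ ν₀ s₂ (ln m) m^{-2ν_min} / M`. -/
theorem stmt_16 (S S' ν ν' : ℝ → ℝ) (s₂ ν₀ : ℝ)
    (hS : ∀ x ∈ Set.Icc (0:ℝ) 1, HasDerivAt S (S' x) x)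
    (hS'cont : ContinuousOn S' (Set.Icc (0:ℝ) 1))
    (hS'bd : ∀ x ∈ Set.Icc (0:ℝ) 1, |S' x| ≤ s₂)
    (hν : ∀ u ∈ S '' Set.Icc (0:ℝ) 1, HasDerivAt ν (ν' u) u)
    (hν'cont : ContinuousOn ν' (S '' Set.Icc (0:ℝ) 1))
    (hν'bd : ∀ u ∈ S '' Set.Icc (0:ℝ) 1, |ν' u| ≤ ν₀)
    (νmin : ℝ) (hνmin : IsLeast ((fun x => ν (S x)) '' Set.Icc (0:ℝ) 1) νmin)
    (m : ℝ) (hm : 1 ≤ m) (d : ℝ) (hd : d ∈ Set.Icc (0:ℝ) 1) (M : ℕ) (hM : 0 < M) :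
    |(1 / (M : ℝ)) * ∑ l ∈ Finset.Icc 1 M, m ^ (-(2 * ν (S (((l : ℝ) - 1 + d) / M)))) -
        ∫ x in (0:ℝ)..1, m ^ (-(2 * ν (S x)))| ≤
      ν₀ * s₂ * Real.log m * m ^ (-(2 * νmin)) / M :=
  stmt_16_general S S' ν ν' s₂ ν₀ hS hS'bd hν hν'bd νmin hνmin m hm d hd M hM
end
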